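/- Let W* and Ŵ be the channels on {1,2,3}→{1,2} with columns W* = [(1,0),(0,1),(0,1)] and Ŵ = [(1,0),(0,1),(1,0)], and for μ ∈ (0,1) let W_{1,μ} = (1−μ)W* + μŴ. Then the unique input distribution maximizing I(p, W_{1,μ}) is p* = (1/2, 1/2, 0), and I(p*, W_{1,μ}) = 1. -/
import Mathlib

noncomputable def binH (t : ℝ) : ℝ := -(t * Real.logb 2 t) - (1 - t) * Real.logb 2 (1 - t)

noncomputable def mutInf {X Y : Type*} [Fintype X] [Fintype Y]
    (p : X → ℝ) (W : X → Y → ℝ) : ℝ :=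
  ∑ x, ∑ y, p x * W x y * Real.logb 2 (W x y / ∑ x', p x' * W x' y)

def IsProb {X : Type*} [Fintype X] (p : X → ℝ) : Prop :=
  (∀ x, 0 ≤ p x) ∧ ∑ x, p x = 1

noncomputable def Wstar : Fin 3 → Fin 2 → ℝ := ![![1, 0], ![0, 1], ![0, 1]]

noncomputable def What : Fin 3 → Fin 2 → ℝ := ![![1, 0], ![0, 1], ![1, 0]]

lemma binH_eq (t : ℝ) : binH t = Real.binEntropy t / Real.log 2 := by
  simp [binH, Real.binEntropy, Real.logb, Real.log_inv]
  ring

lemma binH_le_one (t : ℝ) : binH t ≤ 1 := by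
  rw [binH_eq, div_le_one (Real.log_pos (by norm_num))]
  exact Real.binEntropy_le_log_two

lemma binH_lt_one {t : ℝ} (ht : t ≠ 2⁻¹) : binH t < 1 := by
  rw [binH_eq, div_lt_one (Real.log_pos (by norm_num))]
  exact Real.binEntropy_lt_log_two.2 ht

lemma binH_pos {t : ℝ} (h0 : 0 < t) (h1 : t < 1) : 0 < binH t := by
  rw [binH_eq]
  exact div_pos (Real.binEntropy_pos h0 h1) (Real.log_pos (by norm_num))

lemma mutInf_eq (μ : ℝ) (hμ0 : 0 < μ) (hμ1 : μ < 1) (a b c : ℝ)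
    (ha : 0 ≤ a) (hb : 0 ≤ b) (hc : 0 ≤ c) (hs : a + b + c = 1) :
    mutInf ![a, b, c] (fun x y => (1 - μ) * Wstar x y + μ * What x y)
      = binH (a + c * μ) - c * binH μ := by
  simp only [mutInf, Fin.sum_univ_three, Fin.sum_univ_two, Wstar, What]
  simp only [Matrix.cons_val_zero, Matrix.cons_val_one, Matrix.head_cons,
    Matrix.cons_val_two, Matrix.tail_cons]
  norm_num
  rcases eq_or_lt_of_le hc with hc0 | hc0
  · rw [← hc0]
    simp [binH]
    rw [show (1:ℝ) - a = b from by linarith]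
    ring
  · have hq0 : 0 < a + c * μ := add_pos_of_nonneg_of_pos ha (mul_pos hc0 hμ0)
    have hq1 : 0 < b + c * (1 - μ) := add_pos_of_nonneg_of_pos hb (mul_pos hc0 (by linarith))
    rw [Real.logb_div (ne_of_gt hμ0) (ne_of_gt hq0),
      Real.logb_div (by linarith : (1:ℝ) - μ ≠ 0) (ne_of_gt hq1)]
    simp only [binH]
    rw [show (1:ℝ) - (a + c * μ) = b + c * (1 - μ) from by linarith]
    ring

theorem W1mu_unique_maximizer (μ : ℝ) (hμ0 : 0 < μ) (hμ1 : μ < 1) :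
    mutInf ![1 / 2, 1 / 2, 0] (fun x y => (1 - μ) * Wstar x y + μ * What x y) = 1 ∧
    ∀ p : Fin 3 → ℝ, IsProb p → p ≠ ![1 / 2, 1 / 2, 0] →
      mutInf p (fun x y => (1 - μ) * Wstar x y + μ * What x y) < 1 := by
  constructor
  · rw [mutInf_eq μ hμ0 hμ1 (1/2) (1/2) 0 (by norm_num) (by norm_num) le_rfl (by norm_num)]
    rw [show (1:ℝ)/2 + 0 * μ = 2⁻¹ by ring, binH_eq]
    simp [Real.binEntropy_two_inv, div_self (ne_of_gt (Real.log_pos (by norm_num : (1:ℝ) < 2)))]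
  · intro p hp hne
    obtain ⟨hpos, hsum⟩ := hp
    rw [Fin.sum_univ_three] at hsum
    have hpe : p = ![p 0, p 1, p 2] := by
      ext i; fin_cases i <;> rfl
    rw [hpe, mutInf_eq μ hμ0 hμ1 (p 0) (p 1) (p 2) (hpos 0) (hpos 1) (hpos 2) hsum]
    rcases eq_or_lt_of_le (hpos 2) with hc0 | hc0
    · have ha : p 0 ≠ 2⁻¹ := by
        intro h
        apply hne
        ext i; fin_cases i
        · simpa using h
        · show p 1 = 1 / 2
          rw [← hc0] at hsum; rw [h] at hsum; norm_num at hsum ⊢; linarith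
        · simpa using hc0.symm
      rw [← hc0]
      simp only [zero_mul, add_zero, sub_zero]
      exact binH_lt_one ha
    · have h1 := binH_le_one (p 0 + p 2 * μ)
      have h2 := mul_pos hc0 (binH_pos hμ0 hμ1)
      linarith
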